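/- arXiv:1407.1930 — 4 statements merged into one kernel-verified Lean document; each statement's English description precedes it below -/
import Mathlib

section
/- Let r > 0 and let x, y be points in the Euclidean plane ℝ² with ℓ = dist(x,y) satisfying 0 ≤ ℓ ≤ 4r. Then the Lebesgue measure of the 'danger crescent' closedBall(y,2r) \ closedBall(x,2r) equals A(ℓ) = r²·(8·arcsin(ℓ/(4r)) + (ℓ/r)·√(4 − ℓ²/(4r²))). -/
/-!
Move the centres to `0` and `(0, ℓ)` by an isometry and slice the crescent by the lines
`{b} × ℝ`. For `|b| ≤ R := 2r` the slice is `[ℓ - h, ℓ + h] \ [-h, h]` with `h = √(R² - b²)`, of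
length `min ℓ (2h)`, so the area is `∫ min ℓ (2√(R² - b²)) db`. The integrand is `ℓ` for
`|b| ≤ √(R² - ℓ²/4)` and the chord length `2√(R² - b²)` otherwise, whose primitive is
`R² arcsin (b/R) + b √(R² - b²)`.
-/

open Real MeasureTheory Metric

theorem volume_closedBall_diff_closedBall_eq_of_dist_eq {E : Type*} [NormedAddCommGroup E]
    [InnerProductSpace ℝ E] [FiniteDimensional ℝ E] [MeasurableSpace E] [BorelSpace E]
    {x y x' y' : E} (h : dist x y = dist x' y') (R R' : ℝ) :
    volume (closedBall y R \ closedBall x R') = volume (closedBall y' R \ closedBall x' R') := by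
  have hnorm : ‖y - x‖ = ‖y' - x'‖ := by
    rw [← dist_eq_norm, ← dist_eq_norm, dist_comm, h, dist_comm]
  set L := Submodule.reflection (ℝ ∙ (y - x - (y' - x')))ᗮ
  have hL : L (y - x) = y' - x' := Submodule.reflection_sub hnorm
  set T : E → E := fun p => L (p - x) + x'
  have hT : MeasurePreserving T volume volume :=
    (measurePreserving_add_right volume x').comp
      (L.measurePreserving.comp (measurePreserving_sub_right volume x))
  have hdist : ∀ p z, dist (T p) (L (z - x) + x') = dist p z := fun p z => by
    rw [dist_add_right, L.dist_map, dist_sub_right]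
  have hpre : closedBall y R \ closedBall x R' = T ⁻¹' (closedBall y' R \ closedBall x' R') := by
    ext p
    have hy := hdist p y
    have hx := hdist p x
    rw [hL, sub_add_cancel] at hy
    rw [sub_self, map_zero, zero_add] at hx
    simp only [Set.mem_preimage, Set.mem_sdiff, mem_closedBall, hx, hy]
  rw [hpre, hT.measure_preimage
    (measurableSet_closedBall.diff measurableSet_closedBall).nullMeasurableSet]

theorem Real.volume_Icc_diff_Icc_of_le {a b a' b' : ℝ} (ha : a' ≤ a) :
    volume (Set.Icc a b \ Set.Icc a' b') = ENNReal.ofReal (b - max a b') := by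
  rcases lt_or_ge b' a with hb' | hb'
  · have : Set.Icc a b \ Set.Icc a' b' = Set.Icc a b := by
      ext t; simp only [Set.mem_sdiff, Set.mem_Icc]; grind
    rw [this, Real.volume_Icc, max_eq_left hb'.le]
  · have : Set.Icc a b \ Set.Icc a' b' = Set.Ioc b' b := by
      ext t; simp only [Set.mem_sdiff, Set.mem_Icc, Set.mem_Ioc]; grind
    rw [this, Real.volume_Ioc, max_eq_right hb']

theorem volume_setOf_sq_sub_le_and_lt_sq {ℓ : ℝ} (hℓ : 0 ≤ ℓ) (s : ℝ) :
    volume {a : ℝ | (a - ℓ) ^ 2 ≤ s ∧ s < a ^ 2} = ENNReal.ofReal (min ℓ (2 * √s)) := by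
  rcases lt_or_ge s 0 with hs | hs
  · have : {a : ℝ | (a - ℓ) ^ 2 ≤ s ∧ s < a ^ 2} = ∅ :=
      Set.eq_empty_of_forall_notMem fun a ha => by nlinarith [sq_nonneg (a - ℓ), ha.1]
    rw [this, sqrt_eq_zero_of_nonpos hs.le, mul_zero, min_eq_right hℓ, measure_empty,
      ENNReal.ofReal_zero]
  · obtain ⟨h, hh, rfl⟩ : ∃ h, 0 ≤ h ∧ s = h ^ 2 := ⟨√s, sqrt_nonneg s, (sq_sqrt hs).symm⟩
    have hset : {a : ℝ | (a - ℓ) ^ 2 ≤ h ^ 2 ∧ h ^ 2 < a ^ 2} =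
        Set.Icc (ℓ - h) (ℓ + h) \ Set.Icc (-h) h := by
      ext a
      simp only [Set.mem_ofPred_eq, Set.mem_sdiff, Set.mem_Icc, ← not_le, sq_le_sq,
        abs_of_nonneg hh, abs_le]
      constructor <;> rintro ⟨⟨h1, h2⟩, h3⟩ <;> refine ⟨⟨?_, ?_⟩, h3⟩ <;> linarith
    rw [hset, Real.volume_Icc_diff_Icc_of_le (by linarith), sqrt_sq hh, min_comm,
      ← min_sub_sub_left]
    congr 2 <;> ring

def planarCrescent (R ℓ : ℝ) : Set (ℝ × ℝ) :=
  {q | q.1 ^ 2 + (q.2 - ℓ) ^ 2 ≤ R ^ 2 ∧ R ^ 2 < q.1 ^ 2 + q.2 ^ 2}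

theorem measurableSet_planarCrescent (R ℓ : ℝ) : MeasurableSet (planarCrescent R ℓ) := by
  rw [planarCrescent, Set.ofPred_and]
  exact (measurableSet_le (by fun_prop) (by fun_prop)).inter
    (measurableSet_lt (by fun_prop) (by fun_prop))

theorem volume_preimage_mk_planarCrescent {ℓ : ℝ} (hℓ : 0 ≤ ℓ) (R b : ℝ) :
    volume (Prod.mk b ⁻¹' planarCrescent R ℓ) =
      ENNReal.ofReal (min ℓ (2 * √(R ^ 2 - b ^ 2))) := by
  rw [← volume_setOf_sq_sub_le_and_lt_sq hℓ]
  congr 1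
  ext a
  simp only [Set.mem_preimage, planarCrescent, Set.mem_ofPred_eq, le_sub_iff_add_le',
    sub_lt_iff_lt_add']

theorem closedBall_diff_closedBall_eq_preimage_planarCrescent {R : ℝ} (hR : 0 ≤ R) (ℓ : ℝ) :
    closedBall !₂[0, ℓ] R \ closedBall 0 R =
      (fun p : EuclideanSpace ℝ (Fin 2) => (p 0, p 1)) ⁻¹' planarCrescent R ℓ := by
  ext p
  have hsq : ∀ z : EuclideanSpace ℝ (Fin 2),
      dist p z ≤ R ↔ (p 0 - z 0) ^ 2 + (p 1 - z 1) ^ 2 ≤ R ^ 2 := fun z => by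
    rw [← pow_le_pow_iff_left₀ dist_nonneg hR two_ne_zero, EuclideanSpace.dist_sq_eq,
      Fin.sum_univ_two, Real.dist_eq, Real.dist_eq, sq_abs, sq_abs]
  rw [Set.mem_sdiff, mem_closedBall, mem_closedBall, hsq, hsq, not_le]
  simp [planarCrescent]

theorem volume_closedBall_diff_closedBall_zero {R : ℝ} (hR : 0 ≤ R) (ℓ : ℝ) :
    volume (closedBall !₂[0, ℓ] R \ closedBall 0 R) = volume (planarCrescent R ℓ) := by
  rw [closedBall_diff_closedBall_eq_preimage_planarCrescent hR]
  exact ((volume_preserving_finTwoArrow ℝ).comp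
    (EuclideanSpace.volume_preserving_symm_measurableEquiv_toLp (Fin 2))).measure_preimage
    (measurableSet_planarCrescent R ℓ).nullMeasurableSet

theorem support_min_two_mul_sqrt_sq_sub_sq_subset {ℓ : ℝ} (hℓ : 0 ≤ ℓ) (R : ℝ) :
    Function.support (fun b : ℝ => min ℓ (2 * √(R ^ 2 - b ^ 2))) ⊆ Set.Ioc (-|R|) |R| := by
  refine Function.support_subset_iff'.2 fun b hb => ?_
  have : R ^ 2 - b ^ 2 ≤ 0 := by
    rw [Set.mem_Ioc, not_and_or, not_lt, not_le] at hb
    rcases hb with hb | hb <;> nlinarith [sq_abs R, abs_nonneg R]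
  rw [sqrt_eq_zero_of_nonpos this, mul_zero, min_eq_right hℓ]

theorem volume_planarCrescent {ℓ : ℝ} (hℓ : 0 ≤ ℓ) (R : ℝ) :
    volume (planarCrescent R ℓ) = ENNReal.ofReal (∫ b, min ℓ (2 * √(R ^ 2 - b ^ 2))) := by
  have hsupp : HasCompactSupport fun b : ℝ => min ℓ (2 * √(R ^ 2 - b ^ 2)) :=
    HasCompactSupport.intro isCompact_Icc fun b hb => Function.notMem_support.1 fun h =>
      hb (Set.Ioc_subset_Icc_self (support_min_two_mul_sqrt_sq_sub_sq_subset hℓ R h))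
  rw [Measure.volume_eq_prod, Measure.prod_apply (measurableSet_planarCrescent R ℓ),
    ofReal_integral_eq_lintegral_ofReal
      ((by fun_prop : Continuous _).integrable_of_hasCompactSupport hsupp)
      (ae_of_all _ fun b => le_min hℓ (by positivity))]
  simp_rw [volume_preimage_mk_planarCrescent hℓ]

noncomputable def chordPrimitive (R t : ℝ) : ℝ := R ^ 2 * arcsin (t / R) + t * √(R ^ 2 - t ^ 2)

theorem hasDerivAt_chordPrimitive {R t : ℝ} (hR : 0 < R) (ht : t ∈ Set.Ioo (-R) R) :
    HasDerivAt (chordPrimitive R) (2 * √(R ^ 2 - t ^ 2)) t := by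
  obtain ⟨htl, htr⟩ := ht
  have hpos : 0 < R ^ 2 - t ^ 2 := by nlinarith
  have hne_neg_one : t / R ≠ -1 := by rw [ne_eq, div_eq_iff hR.ne']; linarith
  have hne_one : t / R ≠ 1 := by rw [ne_eq, div_eq_iff hR.ne']; linarith
  have hsqrt : √(1 - (t / R) ^ 2) = √(R ^ 2 - t ^ 2) / R := by
    rw [show 1 - (t / R) ^ 2 = (R ^ 2 - t ^ 2) / R ^ 2 by field_simp, sqrt_div hpos.le,
      sqrt_sq hR.le]
  have harcsin := ((hasDerivAt_arcsin hne_neg_one hne_one).comp t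
    ((hasDerivAt_id t).div_const R)).const_mul (R ^ 2)
  have hmul := (hasDerivAt_id t).mul
    ((hasDerivAt_sqrt hpos.ne').comp t ((hasDerivAt_pow 2 t).const_sub (R ^ 2)))
  refine (harcsin.add hmul).congr_deriv ?_
  simp only [Function.comp_apply, id, hsqrt]
  field_simp
  linear_combination (-2 : ℝ) * sq_sqrt hpos.le

theorem integral_two_mul_sqrt_sq_sub_sq {R a c : ℝ} (hR : 0 < R) (ha : -R ≤ a) (hac : a ≤ c)
    (hc : c ≤ R) :
    ∫ t in a..c, 2 * √(R ^ 2 - t ^ 2) = chordPrimitive R c - chordPrimitive R a := by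
  refine intervalIntegral.integral_eq_sub_of_hasDeriv_right_of_le hac
    (by unfold chordPrimitive; fun_prop)
    (fun t ht =>
      (hasDerivAt_chordPrimitive hR ⟨ha.trans_lt ht.1, ht.2.trans_le hc⟩).hasDerivWithinAt)
    ((by fun_prop : Continuous fun t : ℝ => 2 * √(R ^ 2 - t ^ 2)).intervalIntegrable _ _)

theorem chordPrimitive_neg (R t : ℝ) : chordPrimitive R (-t) = -chordPrimitive R t := by
  simp only [chordPrimitive, neg_div, arcsin_neg, neg_sq]
  ring

theorem chordPrimitive_self {R : ℝ} (hR : 0 < R) : chordPrimitive R R = π * R ^ 2 / 2 := by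
  simp only [chordPrimitive, div_self hR.ne', arcsin_one, sub_self, sqrt_zero, mul_zero,
    add_zero]
  ring

theorem integral_min_two_mul_sqrt_sq_sub_sq {R ℓ : ℝ} (hR : 0 < R) (hℓ0 : 0 ≤ ℓ)
    (hℓR : ℓ ≤ 2 * R) :
    ∫ b, min ℓ (2 * √(R ^ 2 - b ^ 2)) =
      2 * R ^ 2 * arcsin (ℓ / (2 * R)) + ℓ * √(R ^ 2 - ℓ ^ 2 / 4) := by
  set f : ℝ → ℝ := fun b => min ℓ (2 * √(R ^ 2 - b ^ 2))
  -- `±b₀` are the heights at which the chord length `2√(R² - b²)` drops to `ℓ`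
  set b₀ := √(R ^ 2 - ℓ ^ 2 / 4)
  have hb₀ : 0 ≤ b₀ := sqrt_nonneg _
  have hb₀R : b₀ ≤ R := (sqrt_le_left hR.le).2 (by nlinarith)
  have hchord_b₀ : √(R ^ 2 - b₀ ^ 2) = ℓ / 2 := by
    rw [sq_sqrt (by nlinarith), sub_sub_cancel, show ℓ ^ 2 / 4 = (ℓ / 2) ^ 2 by ring,
      sqrt_sq (by linarith)]
  have hf_inner : ∀ b ∈ Set.uIcc (-b₀) b₀, f b = ℓ := fun b hb => by
    rw [Set.uIcc_of_le (by linarith), Set.mem_Icc] at hb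
    have := sqrt_le_sqrt (show R ^ 2 - b₀ ^ 2 ≤ R ^ 2 - b ^ 2 by nlinarith)
    exact min_eq_left (by linarith)
  have hf_outer : ∀ b, b₀ ^ 2 ≤ b ^ 2 → f b = 2 * √(R ^ 2 - b ^ 2) := fun b hb => by
    have := sqrt_le_sqrt (show R ^ 2 - b ^ 2 ≤ R ^ 2 - b₀ ^ 2 by linarith)
    exact min_eq_right (by linarith)
  have hsupp := support_min_two_mul_sqrt_sq_sub_sq_subset hℓ0 R
  rw [abs_of_pos hR] at hsupp
  have hint : ∀ a c, IntervalIntegrable f volume a c := fun a c =>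
    (by fun_prop : Continuous f).intervalIntegrable a c
  rw [← intervalIntegral.integral_eq_integral_of_support_subset hsupp,
    ← intervalIntegral.integral_add_adjacent_intervals (hint (-R) (-b₀)) (hint _ R),
    ← intervalIntegral.integral_add_adjacent_intervals (hint (-b₀) b₀) (hint _ R),
    intervalIntegral.integral_congr hf_inner, intervalIntegral.integral_const, smul_eq_mul]
  have hleft : ∫ b in -R..-b₀, f b = chordPrimitive R (-b₀) - chordPrimitive R (-R) := by
    rw [← integral_two_mul_sqrt_sq_sub_sq hR le_rfl (by linarith) (by linarith)]
    refine intervalIntegral.integral_congr fun b hb => hf_outer b ?_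
    rw [Set.uIcc_of_le (by linarith), Set.mem_Icc] at hb
    nlinarith
  have hright : ∫ b in b₀..R, f b = chordPrimitive R R - chordPrimitive R b₀ := by
    rw [← integral_two_mul_sqrt_sq_sub_sq hR (by linarith) hb₀R le_rfl]
    refine intervalIntegral.integral_congr fun b hb => hf_outer b ?_
    rw [Set.uIcc_of_le hb₀R, Set.mem_Icc] at hb
    nlinarith
  have harcsin : arcsin (b₀ / R) = π / 2 - arcsin (ℓ / (2 * R)) := by
    rw [← arccos_eq_pi_div_two_sub_arcsin, arccos_eq_arcsin (by positivity),
      show 1 - (ℓ / (2 * R)) ^ 2 = (R ^ 2 - ℓ ^ 2 / 4) / R ^ 2 by field_simp; ring,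
      sqrt_div' _ (sq_nonneg R), sqrt_sq hR.le]
  rw [hleft, hright, chordPrimitive_neg, chordPrimitive_neg, chordPrimitive_self hR]
  simp only [chordPrimitive, hchord_b₀, harcsin]
  ring

theorem crescent_area_general (r : ℝ) (hr : 0 < r)
    (x y : EuclideanSpace ℝ (Fin 2)) (ℓ : ℝ) (hℓ : ℓ = dist x y)
    (hℓ4 : ℓ ≤ 4 * r) :
    volume (closedBall y (2 * r) \ closedBall x (2 * r)) =
      ENNReal.ofReal
        (r ^ 2 * (8 * arcsin (ℓ / (4 * r)) +
          (ℓ / r) * Real.sqrt (4 - ℓ ^ 2 / (4 * r ^ 2)))) := by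
  have hℓ0 : 0 ≤ ℓ := hℓ ▸ dist_nonneg
  have hdist : dist x y = dist 0 !₂[0, ℓ] := by
    simp [EuclideanSpace.dist_eq, hℓ]
  have hsqrt : √((2 * r) ^ 2 - ℓ ^ 2 / 4) = r * √(4 - ℓ ^ 2 / (4 * r ^ 2)) := by
    rw [show (2 * r) ^ 2 - ℓ ^ 2 / 4 = r ^ 2 * (4 - ℓ ^ 2 / (4 * r ^ 2)) by field_simp; ring,
      sqrt_mul (sq_nonneg r), sqrt_sq hr.le]
  rw [volume_closedBall_diff_closedBall_eq_of_dist_eq hdist,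
    volume_closedBall_diff_closedBall_zero (by positivity), volume_planarCrescent hℓ0,
    integral_min_two_mul_sqrt_sq_sub_sq (by positivity) hℓ0 (by linarith), hsqrt,
    show 2 * (2 * r) = 4 * r by ring]
  congr 1
  field_simp
  ring

theorem crescent_area (r : ℝ) (hr : 0 < r)
    (x y : EuclideanSpace ℝ (Fin 2)) (ℓ : ℝ) (hℓ : ℓ = dist x y)
    (hℓ0 : 0 ≤ ℓ) (hℓ4 : ℓ ≤ 4 * r) :
    volume (closedBall y (2 * r) \ closedBall x (2 * r)) =
      ENNReal.ofReal
        (r ^ 2 * (8 * arcsin (ℓ / (4 * r)) +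
          (ℓ / r) * Real.sqrt (4 - ℓ ^ 2 / (4 * r ^ 2)))) :=
  crescent_area_general r hr x y ℓ hℓ hℓ4
end

section
/- Let r > 0 and let x, y be points in the Euclidean plane ℝ² with ℓ = dist(x,y) satisfying 0 ≤ ℓ ≤ 4r. Then the Lebesgue measure of the intersection closedBall(x,2r) ∩ closedBall(y,2r) equals 4πr² − A(ℓ), where A(ℓ) = r²·(8·arcsin(ℓ/(4r)) + (ℓ/r)·√(4 − ℓ²/(4r²))). -/
/-!
Move the centres by an isometry to `0` and `(ℓ, 0)`. The lens is then the union of the two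
circular segments of radius `R = 2r` cut off by the line `p.1 = ℓ/2`, mirror images of each other
that meet in a null set. By Fubini each segment has area `∫_{ℓ/2}^{R} 2 √(R² - a²) da`, evaluated
with the primitive `a √(R² - a²) + R² arcsin (a / R)`.
-/

open Real MeasureTheory Metric

theorem volume_setOf_abs_snd_le {s : Set ℝ} {g : ℝ → ℝ} (hs : MeasurableSet s)
    (hg : Measurable g) (hg_int : IntegrableOn g s) (hg_nonneg : ∀ a ∈ s, 0 ≤ g a) :
    volume {p : ℝ × ℝ | p.1 ∈ s ∧ |p.2| ≤ g p.1} = ENNReal.ofReal (∫ a in s, 2 * g a) := by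
  have hmeas : MeasurableSet {p : ℝ × ℝ | p.1 ∈ s ∧ |p.2| ≤ g p.1} :=
    (measurable_fst hs).inter (measurableSet_le measurable_snd.abs (hg.comp measurable_fst))
  have hslice (a : ℝ) : volume (Prod.mk a ⁻¹' {p : ℝ × ℝ | p.1 ∈ s ∧ |p.2| ≤ g p.1}) =
      s.indicator (fun a ↦ ENNReal.ofReal (2 * g a)) a := by
    by_cases ha : a ∈ s
    · have : Prod.mk a ⁻¹' {p : ℝ × ℝ | p.1 ∈ s ∧ |p.2| ≤ g p.1} = Set.Icc (-g a) (g a) := by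
        ext b; simp [ha, abs_le]
      rw [this, Real.volume_Icc, Set.indicator_of_mem ha, sub_neg_eq_add, two_mul]
    · have : Prod.mk a ⁻¹' {p : ℝ × ℝ | p.1 ∈ s ∧ |p.2| ≤ g p.1} = ∅ := by
        ext b; simp [ha]
      rw [this, Set.indicator_of_notMem ha, measure_empty]
  rw [Measure.volume_eq_prod, Measure.prod_apply hmeas]
  simp_rw [hslice]
  rw [lintegral_indicator hs, ofReal_integral_eq_lintegral_ofReal (hg_int.const_mul 2)]
  exact (ae_restrict_iff' hs).2 (Filter.Eventually.of_forall fun a ha ↦ by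
    simpa using hg_nonneg a ha)

theorem hasDerivAt_mul_sqrt_sq_sub_sq_add_arcsin {R a : ℝ} (hR : 0 < R)
    (ha : a ∈ Set.Ioo (-R) R) :
    HasDerivAt (fun a ↦ a * √(R ^ 2 - a ^ 2) + R ^ 2 * arcsin (a / R))
      (2 * √(R ^ 2 - a ^ 2)) a := by
  have hpos : 0 < R ^ 2 - a ^ 2 := by nlinarith [ha.1, ha.2]
  have hsqrt : HasDerivAt (fun a ↦ √(R ^ 2 - a ^ 2)) (-a / √(R ^ 2 - a ^ 2)) a := by
    convert ((hasDerivAt_pow 2 a).const_sub (R ^ 2)).sqrt hpos.ne' using 1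
    ring
  have harcsin : HasDerivAt (fun a ↦ arcsin (a / R)) (1 / √(R ^ 2 - a ^ 2)) a := by
    have h1 : a / R ≠ -1 := by
      rw [ne_eq, div_eq_iff hR.ne']; linarith [ha.1]
    have h2 : a / R ≠ 1 := by
      rw [ne_eq, div_eq_iff hR.ne']; linarith [ha.2]
    refine ((Real.hasDerivAt_arcsin h1 h2).comp a ((hasDerivAt_id a).div_const R)).congr_deriv ?_
    rw [show 1 - (a / R) ^ 2 = (R ^ 2 - a ^ 2) / R ^ 2 by field_simp,
      Real.sqrt_div' _ (sq_nonneg R), Real.sqrt_sq hR.le]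
    field_simp
  refine (((hasDerivAt_id a).mul hsqrt).add (harcsin.const_mul (R ^ 2))).congr_deriv ?_
  have hs := Real.sq_sqrt hpos.le
  simp only [id_eq]
  field_simp
  linear_combination -hs

noncomputable def circularSegmentArea (R h : ℝ) : ℝ :=
  R ^ 2 * (π / 2 - arcsin (h / R)) - h * √(R ^ 2 - h ^ 2)

theorem integral_two_mul_sqrt_sq_sub_sq_s1 {R h : ℝ} (hR : 0 < R) (hh : h ∈ Set.Icc (-R) R) :
    ∫ a in h..R, 2 * √(R ^ 2 - a ^ 2) = circularSegmentArea R h := by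
  have hderiv (a : ℝ) (ha : a ∈ Set.Ioo h R) :=
    hasDerivAt_mul_sqrt_sq_sub_sq_add_arcsin hR ⟨hh.1.trans_lt ha.1, ha.2⟩
  rw [intervalIntegral.integral_eq_sub_of_hasDerivAt_of_le hh.2 (by fun_prop) hderiv
    ((by fun_prop : Continuous fun a : ℝ ↦ 2 * √(R ^ 2 - a ^ 2)).intervalIntegrable _ _)]
  simp only [circularSegmentArea, sub_self, Real.sqrt_zero, div_self hR.ne', arcsin_one]
  ring

theorem volume_circularSegment {R h : ℝ} (hR : 0 < R) (hh : h ∈ Set.Icc (-R) R) :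
    volume {p : ℝ × ℝ | h ≤ p.1 ∧ p.1 ^ 2 + p.2 ^ 2 ≤ R ^ 2} =
      ENNReal.ofReal (circularSegmentArea R h) := by
  have hset : {p : ℝ × ℝ | h ≤ p.1 ∧ p.1 ^ 2 + p.2 ^ 2 ≤ R ^ 2} =
      {p : ℝ × ℝ | p.1 ∈ Set.Icc h R ∧ |p.2| ≤ √(R ^ 2 - p.1 ^ 2)} := by
    ext ⟨a, b⟩
    simp only [Set.mem_ofPred_eq, Set.mem_Icc]
    constructor
    · rintro ⟨hha, hab⟩
      exact ⟨⟨hha, by nlinarith⟩, Real.abs_le_sqrt (by linarith)⟩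
    · rintro ⟨⟨hha, haR⟩, hb⟩
      have hnn : 0 ≤ R ^ 2 - a ^ 2 := by nlinarith [hh.1]
      rw [Real.le_sqrt (abs_nonneg b) hnn, sq_abs] at hb
      exact ⟨hha, by linarith⟩
  rw [hset, volume_setOf_abs_snd_le measurableSet_Icc (by fun_prop)
      (by fun_prop : Continuous fun a : ℝ ↦ √(R ^ 2 - a ^ 2)).integrableOn_Icc
      (fun a _ ↦ Real.sqrt_nonneg _),
    integral_Icc_eq_integral_Ioc, ← intervalIntegral.integral_of_le hh.2,
    integral_two_mul_sqrt_sq_sub_sq_s1 hR hh]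

theorem volume_lens_prod {R ℓ : ℝ} (hR : 0 < R) (hℓ : ℓ ∈ Set.Icc 0 (2 * R)) :
    volume {p : ℝ × ℝ | p.1 ^ 2 + p.2 ^ 2 ≤ R ^ 2 ∧ (p.1 - ℓ) ^ 2 + p.2 ^ 2 ≤ R ^ 2} =
      ENNReal.ofReal (2 * circularSegmentArea R (ℓ / 2)) := by
  set S := {p : ℝ × ℝ | ℓ / 2 ≤ p.1 ∧ p.1 ^ 2 + p.2 ^ 2 ≤ R ^ 2}
  set σ : ℝ × ℝ → ℝ × ℝ := fun p ↦ (ℓ - p.1, p.2)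
  have hσ : MeasurePreserving σ volume volume := by
    rw [Measure.volume_eq_prod]
    exact (Measure.measurePreserving_sub_left volume ℓ).prod (MeasurePreserving.id volume)
  have hS : MeasurableSet S := by
    measurability
  have hlens : {p : ℝ × ℝ | p.1 ^ 2 + p.2 ^ 2 ≤ R ^ 2 ∧ (p.1 - ℓ) ^ 2 + p.2 ^ 2 ≤ R ^ 2} =
      S ∪ σ ⁻¹' S := by
    ext ⟨a, b⟩
    simp only [S, σ, Set.mem_union, Set.mem_preimage, Set.mem_ofPred_eq]
    constructor
    · rintro ⟨h₀, hℓ'⟩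
      rcases le_total (ℓ / 2) a with ha | ha
      · exact Or.inl ⟨ha, h₀⟩
      · exact Or.inr ⟨by linarith, by linarith⟩
    · rintro (⟨ha, h₀⟩ | ⟨ha, hℓ'⟩)
      · exact ⟨h₀, by nlinarith [hℓ.1]⟩
      · exact ⟨by nlinarith [hℓ.1], by linarith⟩
  have hdisj : AEDisjoint volume S (σ ⁻¹' S) := by
    refine measure_mono_null (t := Prod.fst ⁻¹' {ℓ / 2}) ?_ ?_
    · rintro ⟨a, b⟩ ⟨⟨ha, -⟩, ha', -⟩
      exact le_antisymm (by simp only [σ] at ha'; linarith) ha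
    · rw [← Set.prod_univ, Measure.volume_eq_prod, Measure.prod_prod, Real.volume_singleton,
        zero_mul]
  rw [hlens, measure_union₀ (hS.preimage hσ.measurable).nullMeasurableSet hdisj,
    hσ.measure_preimage hS.nullMeasurableSet, ← two_mul,
    volume_circularSegment hR ⟨by linarith [hℓ.1], by linarith [hℓ.2]⟩,
    ENNReal.ofReal_mul zero_le_two, ENNReal.ofReal_ofNat]

theorem volume_closedBall_inter_closedBall_congr {E : Type*} [NormedAddCommGroup E]
    [InnerProductSpace ℝ E] [FiniteDimensional ℝ E] [MeasurableSpace E] [BorelSpace E]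
    {x y x' y' : E} (h : dist x y = dist x' y') (R R' : ℝ) :
    volume (closedBall x R ∩ closedBall y R') = volume (closedBall x' R ∩ closedBall y' R') := by
  set f := (ℝ ∙ ((y - x) - (y' - x')))ᗮ.reflection
  have hf : f (y - x) = y' - x' := by
    refine Submodule.reflection_sub ?_
    rwa [← dist_eq_norm', ← dist_eq_norm']
  set T : E → E := fun p ↦ f (p - x) + x'
  have hT : MeasurePreserving T volume volume :=
    (measurePreserving_add_right volume x').comp
      (f.measurePreserving.comp (measurePreserving_sub_right volume x))
  have hT_iso : Isometry T :=
    (IsometryEquiv.addRight x').isometry.comp (f.isometry.comp (IsometryEquiv.subRight x).isometry)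
  have hTx : T x = x' := by simp [T]
  have hTy : T y = y' := by simp only [T, hf, sub_add_cancel]
  rw [← hTx, ← hTy, ← hT_iso.preimage_closedBall x R, ← hT_iso.preimage_closedBall y R',
    ← Set.preimage_inter,
    hT.measure_preimage (measurableSet_closedBall.inter measurableSet_closedBall).nullMeasurableSet]

theorem EuclideanSpace.mem_closedBall_iff_fin_two {p c : EuclideanSpace ℝ (Fin 2)} {R : ℝ}
    (hR : 0 ≤ R) : p ∈ closedBall c R ↔ (p 0 - c 0) ^ 2 + (p 1 - c 1) ^ 2 ≤ R ^ 2 := by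
  rw [mem_closedBall, EuclideanSpace.dist_eq, Fin.sum_univ_two, Real.dist_eq, Real.dist_eq,
    sq_abs, sq_abs, Real.sqrt_le_left hR]

theorem volume_closedBall_zero_inter_closedBall_single {R : ℝ} (hR : 0 ≤ R) (ℓ : ℝ) :
    volume (closedBall (0 : EuclideanSpace ℝ (Fin 2)) R ∩
        closedBall (EuclideanSpace.single 0 ℓ) R) =
      volume {p : ℝ × ℝ | p.1 ^ 2 + p.2 ^ 2 ≤ R ^ 2 ∧ (p.1 - ℓ) ^ 2 + p.2 ^ 2 ≤ R ^ 2} := by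
  set ψ : EuclideanSpace ℝ (Fin 2) → ℝ × ℝ := fun p ↦ (p 0, p 1)
  have hψ : MeasurePreserving ψ volume volume :=
    (volume_preserving_finTwoArrow ℝ).comp (PiLp.volume_preserving_ofLp (Fin 2))
  have hset : closedBall (0 : EuclideanSpace ℝ (Fin 2)) R ∩
      closedBall (EuclideanSpace.single 0 ℓ) R =
      ψ ⁻¹' {p : ℝ × ℝ | p.1 ^ 2 + p.2 ^ 2 ≤ R ^ 2 ∧ (p.1 - ℓ) ^ 2 + p.2 ^ 2 ≤ R ^ 2} := by
    ext p
    simp [ψ, EuclideanSpace.mem_closedBall_iff_fin_two hR]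
  rw [hset, hψ.measure_preimage (by measurability)]

theorem lens_area_general (r : ℝ) (hr : 0 < r)
    (x y : EuclideanSpace ℝ (Fin 2)) (ℓ : ℝ) (hℓ : ℓ = dist x y)
    (hℓ4 : ℓ ≤ 4 * r) :
    volume (closedBall x (2 * r) ∩ closedBall y (2 * r)) =
      ENNReal.ofReal
        (4 * π * r ^ 2 -
          r ^ 2 * (8 * arcsin (ℓ / (4 * r)) +
            (ℓ / r) * Real.sqrt (4 - ℓ ^ 2 / (4 * r ^ 2)))) := by
  have hℓ0 : 0 ≤ ℓ := hℓ ▸ dist_nonneg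
  have hdist : dist x y = dist 0 (EuclideanSpace.single (0 : Fin 2) ℓ) := by
    rw [dist_zero_left, PiLp.norm_single, Real.norm_of_nonneg hℓ0, hℓ]
  rw [volume_closedBall_inter_closedBall_congr hdist,
    volume_closedBall_zero_inter_closedBall_single (by positivity),
    volume_lens_prod (by positivity) ⟨hℓ0, by linarith⟩]
  have hsqrt : √((2 * r) ^ 2 - (ℓ / 2) ^ 2) = r * √(4 - ℓ ^ 2 / (4 * r ^ 2)) := by
    rw [show (2 * r) ^ 2 - (ℓ / 2) ^ 2 = r ^ 2 * (4 - ℓ ^ 2 / (4 * r ^ 2)) by field_simp; ring,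
      Real.sqrt_mul (sq_nonneg r), Real.sqrt_sq hr.le]
  rw [circularSegmentArea, hsqrt, show ℓ / 2 / (2 * r) = ℓ / (4 * r) by ring]
  congr 1
  field_simp
  ring

theorem lens_area (r : ℝ) (hr : 0 < r)
    (x y : EuclideanSpace ℝ (Fin 2)) (ℓ : ℝ) (hℓ : ℓ = dist x y)
    (hℓ0 : 0 ≤ ℓ) (hℓ4 : ℓ ≤ 4 * r) :
    volume (closedBall x (2 * r) ∩ closedBall y (2 * r)) =
      ENNReal.ofReal
        (4 * π * r ^ 2 -
          r ^ 2 * (8 * arcsin (ℓ / (4 * r)) +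
            (ℓ / r) * Real.sqrt (4 - ℓ ^ 2 / (4 * r ^ 2)))) :=
  lens_area_general r hr x y ℓ hℓ hℓ4
end

section
/- Let r > 0, ℓ > 0, s > 0 with |ℓ − 2r| ≤ s ≤ ℓ + 2r, and in the Euclidean plane let y be a point and x = y + (ℓ, 0). Then the Lebesgue measure of the set of angles {φ ∈ (−π, π] : dist(y + (s·cos φ, s·sin φ), x) > 2r} equals 2·(π − arccos((s² + ℓ² − 4r²)/(2ℓs))). -/
/-!
Writing `y + s (cos φ, sin φ) - x = s (cos φ, sin φ) - (ℓ, 0)`, the law of cosines turns the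
condition `2r < dist` into `cos φ < c` with `c = (s² + ℓ² - 4r²) / (2ℓs) ∈ [-1, 1]`. Since `cos` is
even and strictly decreasing on `[0, π]`, for `φ ∈ (-π, π]` this says `arccos c < |φ|`, a union of
two intervals of length `π - arccos c` each.
-/

open Real MeasureTheory Metric

lemma dist_polar_sq (s ℓ φ : ℝ) :
    dist ((WithLp.equiv 2 (Fin 2 → ℝ)).symm ![s * cos φ, s * sin φ])
      ((WithLp.equiv 2 (Fin 2 → ℝ)).symm ![ℓ, 0]) ^ 2 = s ^ 2 + ℓ ^ 2 - 2 * ℓ * s * cos φ := by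
  rw [EuclideanSpace.dist_eq, sq_sqrt (by positivity)]
  simp [Fin.sum_univ_two, Real.dist_eq, sq_abs]
  linear_combination s ^ 2 * sin_sq_add_cos_sq φ

lemma lt_dist_polar_iff_cos_lt {r ℓ s : ℝ} (hr : 0 ≤ r) (hℓ : 0 < ℓ) (hs : 0 < s) (φ : ℝ) :
    2 * r < dist ((WithLp.equiv 2 (Fin 2 → ℝ)).symm ![s * cos φ, s * sin φ])
      ((WithLp.equiv 2 (Fin 2 → ℝ)).symm ![ℓ, 0]) ↔
      cos φ < (s ^ 2 + ℓ ^ 2 - 4 * r ^ 2) / (2 * ℓ * s) := by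
  rw [← sq_lt_sq₀ (by positivity) dist_nonneg, dist_polar_sq, lt_div_iff₀ (by positivity)]
  constructor <;> intro h <;> linarith

lemma cos_lt_cos_iff_lt_abs {θ φ : ℝ} (hθ₀ : 0 ≤ θ) (hθπ : θ ≤ π) (hφ : |φ| ≤ π) :
    cos φ < cos θ ↔ θ < |φ| := by
  rw [← cos_abs φ]
  exact strictAntiOn_cos.lt_iff_gt ⟨abs_nonneg φ, hφ⟩ ⟨hθ₀, hθπ⟩

lemma setOf_mem_Ioc_and_lt_abs {θ : ℝ} (hθ : 0 ≤ θ) :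
    {φ : ℝ | φ ∈ Set.Ioc (-π) π ∧ θ < |φ|} = Set.Ioo (-π) (-θ) ∪ Set.Ioc θ π := by
  ext φ
  simp only [Set.mem_union, Set.mem_Ioc, Set.mem_Ioo, lt_abs]
  constructor
  · rintro ⟨⟨h₁, h₂⟩, h | h⟩
    · exact Or.inr ⟨h, h₂⟩
    · exact Or.inl ⟨h₁, by linarith⟩
  · rintro (⟨h₁, h₂⟩ | ⟨h₁, h₂⟩)
    · exact ⟨⟨h₁, by linarith [pi_pos]⟩, Or.inr (by linarith)⟩
    · exact ⟨⟨by linarith [pi_pos], h₂⟩, Or.inl h₁⟩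

lemma volume_setOf_mem_Ioc_and_cos_lt_cos {θ : ℝ} (hθ₀ : 0 ≤ θ) (hθπ : θ ≤ π) :
    volume {φ : ℝ | φ ∈ Set.Ioc (-π) π ∧ cos φ < cos θ} = ENNReal.ofReal (2 * (π - θ)) := by
  have hset : {φ : ℝ | φ ∈ Set.Ioc (-π) π ∧ cos φ < cos θ} =
      {φ : ℝ | φ ∈ Set.Ioc (-π) π ∧ θ < |φ|} :=
    Set.ext fun _ => and_congr_right fun hφ =>
      cos_lt_cos_iff_lt_abs hθ₀ hθπ (abs_le.2 ⟨hφ.1.le, hφ.2⟩)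
  have hdisj : Disjoint (Set.Ioo (-π) (-θ)) (Set.Ioc θ π) :=
    Set.disjoint_left.2 fun φ h₁ h₂ => by linarith [h₁.2, h₂.1]
  rw [hset, setOf_mem_Ioc_and_lt_abs hθ₀, measure_union hdisj measurableSet_Ioc, volume_Ioo,
    volume_Ioc, ← ENNReal.ofReal_add (by linarith) (by linarith)]
  ring_nf

theorem arc_angle_measure (r ℓ s : ℝ) (hr : 0 < r) (hℓ : 0 < ℓ) (hs : 0 < s)
    (h1 : |ℓ - 2 * r| ≤ s) (h2 : s ≤ ℓ + 2 * r)
    (y x : EuclideanSpace ℝ (Fin 2)) (hx : x = y + (WithLp.equiv 2 (Fin 2 → ℝ)).symm ![ℓ, 0]) :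
    volume {φ : ℝ | φ ∈ Set.Ioc (-π) π ∧
        2 * r < dist (y + (WithLp.equiv 2 (Fin 2 → ℝ)).symm ![s * Real.cos φ, s * Real.sin φ]) x} =
      ENNReal.ofReal
        (2 * (π - arccos ((s ^ 2 + ℓ ^ 2 - 4 * r ^ 2) / (2 * ℓ * s)))) := by
  set c := (s ^ 2 + ℓ ^ 2 - 4 * r ^ 2) / (2 * ℓ * s)
  obtain ⟨hℓs₁, hℓs₂⟩ := abs_le.1 h1
  have hpos : 0 < 2 * ℓ * s := by positivity
  have hc₁ : -1 ≤ c := by rw [le_div_iff₀ hpos]; nlinarith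
  have hc₂ : c ≤ 1 := by rw [div_le_iff₀ hpos]; nlinarith
  have hset : {φ : ℝ | φ ∈ Set.Ioc (-π) π ∧
      2 * r < dist (y + (WithLp.equiv 2 (Fin 2 → ℝ)).symm ![s * cos φ, s * sin φ]) x} =
      {φ : ℝ | φ ∈ Set.Ioc (-π) π ∧ cos φ < cos (arccos c)} := by
    ext φ
    refine and_congr_right fun _ => ?_
    rw [cos_arccos hc₁ hc₂, hx, dist_add_left, lt_dist_polar_iff_cos_lt hr.le hℓ hs]
  rw [hset, volume_setOf_mem_Ioc_and_cos_lt_cos (arccos_nonneg c) (arccos_le_pi c)]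
end

section
/- Let Ω be a measurable space, let ρ : Ω × Ω → ℝ be a bounded nonnegative measurable function, let K be a Markov kernel on Ω × Ω, and let α > 0. Suppose that for every pair p ∈ Ω × Ω, ∫ ρ dK(p) ≤ e^{−α}·ρ(p). Then for every starting pair p₀, every t ∈ ℕ, and every ε > 0, the probability under the t-step distribution (K^t)(p₀) of the event {q ∈ Ω × Ω : ρ(q) > ε} is at most (ρ(p₀)/ε)·e^{−αt}. -/
/-!
Markov's inequality bounds the tail probability by `E[ρ(X_t)] / ε`, and the one-step
contraction `∫ ρ dK(p) ≤ e^{-α} ρ(p)`, integrated against the law of `X_{t-1}`, gives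
`E[ρ(X_t)] ≤ e^{-αt} ρ(p₀)` by induction on `t`. The induction is run on the lower
Lebesgue integral of `ofReal ∘ ρ`, which is monotone and commutes with kernel composition
without integrability side conditions; boundedness of `ρ` is what lets the Bochner-integral
hypothesis be transferred to it.
-/

open MeasureTheory ProbabilityTheory
open scoped ENNReal

noncomputable def iterKernel {S : Type*} [MeasurableSpace S]
    (K : Kernel S S) : ℕ → Kernel S S
  | 0 => Kernel.id
  | (t + 1) => K ∘ₖ iterKernel K t

theorem lintegral_iterKernel_le_pow_mul {S : Type*} [MeasurableSpace S] (K : Kernel S S)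
    {f : S → ℝ≥0∞} (hf : Measurable f) {c : ℝ≥0∞} (hK : ∀ p, ∫⁻ q, f q ∂K p ≤ c * f p)
    (t : ℕ) (p : S) : ∫⁻ q, f q ∂iterKernel K t p ≤ c ^ t * f p := by
  induction t with
  | zero => simp [iterKernel, Kernel.id_apply, lintegral_dirac' _ hf]
  | succ t ih =>
    calc ∫⁻ q, f q ∂iterKernel K (t + 1) p
        = ∫⁻ r, ∫⁻ q, f q ∂K r ∂iterKernel K t p := Kernel.lintegral_comp _ _ _ hf
      _ ≤ ∫⁻ r, c * f r ∂iterKernel K t p := lintegral_mono hK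
      _ = c * ∫⁻ r, f r ∂iterKernel K t p := lintegral_const_mul _ hf
      _ ≤ c * (c ^ t * f p) := by gcongr
      _ = c ^ (t + 1) * f p := by ring

theorem lintegral_ofReal_eq_ofReal_integral_of_le {α : Type*} [MeasurableSpace α]
    {μ : Measure α} [IsFiniteMeasure μ] {f : α → ℝ} (hf : Measurable f) (hf_nonneg : ∀ x, 0 ≤ f x)
    {C : ℝ} (hfC : ∀ x, f x ≤ C) :
    ∫⁻ x, ENNReal.ofReal (f x) ∂μ = ENNReal.ofReal (∫ x, f x ∂μ) := by
  have hint : Integrable f μ :=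
    .of_bound hf.aestronglyMeasurable C <| ae_of_all _ fun x => by
      rw [Real.norm_of_nonneg (hf_nonneg x)]; exact hfC x
  exact (ofReal_integral_eq_lintegral_ofReal hint (ae_of_all _ hf_nonneg)).symm

theorem measure_lt_le_lintegral_ofReal_div {α : Type*} [MeasurableSpace α] (μ : Measure α)
    {f : α → ℝ} (hf : Measurable f) {ε : ℝ} (hε : 0 < ε) :
    μ {x | ε < f x} ≤ (∫⁻ x, ENNReal.ofReal (f x) ∂μ) / ENNReal.ofReal ε :=
  calc μ {x | ε < f x}
      ≤ μ {x | ENNReal.ofReal ε ≤ ENNReal.ofReal (f x)} :=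
        measure_mono fun _ hx => ENNReal.ofReal_le_ofReal (le_of_lt hx)
    _ ≤ _ := meas_ge_le_lintegral_div hf.ennreal_ofReal.aemeasurable
        (ENNReal.ofReal_pos.mpr hε).ne' ENNReal.ofReal_ne_top

theorem path_coupling_tail_bound_general {Ω : Type*} [MeasurableSpace Ω]
    (ρ : Ω × Ω → ℝ) (hmeas : Measurable ρ) (hnonneg : ∀ p, 0 ≤ ρ p)
    (hbdd : ∃ C : ℝ, ∀ p, ρ p ≤ C)
    (K : Kernel (Ω × Ω) (Ω × Ω)) [IsMarkovKernel K]
    (α : ℝ)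
    (hcontract : ∀ p, ∫ q, ρ q ∂(K p) ≤ Real.exp (-α) * ρ p) :
    ∀ (p₀ : Ω × Ω) (t : ℕ) (ε : ℝ), 0 < ε →
      (iterKernel K t p₀) {q : Ω × Ω | ε < ρ q} ≤
        ENNReal.ofReal (ρ p₀ / ε * Real.exp (-α * t)) := by
  intro p₀ t ε hε
  obtain ⟨C, hC⟩ := hbdd
  have hstep : ∀ p, ∫⁻ q, ENNReal.ofReal (ρ q) ∂K p ≤
      ENNReal.ofReal (Real.exp (-α)) * ENNReal.ofReal (ρ p) := fun p => by
    rw [lintegral_ofReal_eq_ofReal_integral_of_le hmeas hnonneg hC,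
      ← ENNReal.ofReal_mul (Real.exp_nonneg _)]
    exact ENNReal.ofReal_le_ofReal (hcontract p)
  calc (iterKernel K t p₀) {q | ε < ρ q}
      ≤ (∫⁻ q, ENNReal.ofReal (ρ q) ∂iterKernel K t p₀) / ENNReal.ofReal ε :=
        measure_lt_le_lintegral_ofReal_div _ hmeas hε
    _ ≤ ENNReal.ofReal (Real.exp (-α)) ^ t * ENNReal.ofReal (ρ p₀) / ENNReal.ofReal ε := by
        gcongr
        exact lintegral_iterKernel_le_pow_mul K hmeas.ennreal_ofReal hstep t p₀
    _ = ENNReal.ofReal (ρ p₀ / ε * Real.exp (-α * t)) := by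
        rw [← ENNReal.ofReal_pow (Real.exp_nonneg _), ← Real.exp_nat_mul,
          ← ENNReal.ofReal_mul (Real.exp_nonneg _), ← ENNReal.ofReal_div_of_pos hε]
        ring_nf

theorem path_coupling_tail_bound {Ω : Type*} [MeasurableSpace Ω]
    (ρ : Ω × Ω → ℝ) (hmeas : Measurable ρ) (hnonneg : ∀ p, 0 ≤ ρ p)
    (hbdd : ∃ C : ℝ, ∀ p, ρ p ≤ C)
    (K : Kernel (Ω × Ω) (Ω × Ω)) [IsMarkovKernel K]
    (α : ℝ) (hα : 0 < α)
    (hcontract : ∀ p, ∫ q, ρ q ∂(K p) ≤ Real.exp (-α) * ρ p) :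
    ∀ (p₀ : Ω × Ω) (t : ℕ) (ε : ℝ), 0 < ε →
      (iterKernel K t p₀) {q : Ω × Ω | ε < ρ q} ≤
        ENNReal.ofReal (ρ p₀ / ε * Real.exp (-α * t)) :=
  path_coupling_tail_bound_general ρ hmeas hnonneg hbdd K α hcontract
end
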